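/- For every strictly positive formula φ, the formula F(T(φ)) is provably equivalent to φ in the system K⁺, i.e. F(T(φ)) ⊢_{K⁺} φ and φ ⊢_{K⁺} F(T(φ)). -/

import Mathlib

inductive MTree : Type where
  | node : List ℕ → List (ℕ × MTree) → MTree

namespace MTree

mutual
def numNodes : MTree → ℕ
  | .node _ Γ => 1 + numNodesL Γ
def numNodesL : List (ℕ × MTree) → ℕ
  | [] => 0
  | (_, t) :: Γ => numNodes t + numNodesL Γ
end

mutual
def height : MTree → ℕ
  | .node _ [] => 0
  | .node _ (p :: Γ) => heightL (p :: Γ) + 1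
def heightL : List (ℕ × MTree) → ℕ
  | [] => 0
  | (_, t) :: Γ => max (height t) (heightL Γ)
end

mutual
def width : MTree → ℕ
  | .node _ [] => 1
  | .node _ (p :: Γ) => max (p :: Γ).length (widthL (p :: Γ))
def widthL : List (ℕ × MTree) → ℕ
  | [] => 0
  | (_, t) :: Γ => max (width t) (widthL Γ)
end

def sum : MTree → MTree → MTree
  | .node Δ Γ, .node Δ' Γ' => .node (Δ ++ Δ') (Γ ++ Γ')

inductive IsPos : List ℕ → MTree → Prop where
  | nil : ∀ t, IsPos [] t
  | cons : ∀ {Δ : List ℕ} {Γ : List (ℕ × MTree)} {i : ℕ} {k : List ℕ}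
      (h : i < Γ.length), IsPos k (Γ.get ⟨i, h⟩).2 → IsPos (i :: k) (.node Δ Γ)

def subtree : List ℕ → MTree → MTree
  | [], t => t
  | i :: k, .node Δ Γ =>
    match Γ[i]? with
    | some p => subtree k p.2
    | none => .node Δ Γ

def replace : List ℕ → MTree → MTree → MTree
  | [], _, s => s
  | i :: k, .node Δ Γ, s =>
      .node Δ (Γ.modify i (fun p => (p.1, replace k p.2 s)))

inductive RhoPlus : MTree → MTree → Prop where
  | mk : ∀ (Δ : List ℕ) (Γ : List (ℕ × MTree)) (i : ℕ) (h : i < Δ.length),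
      RhoPlus (.node Δ Γ) (.node (Δ.get ⟨i, h⟩ :: Δ) Γ)

inductive RhoMinus : MTree → MTree → Prop where
  | mk : ∀ (Δ : List ℕ) (Γ : List (ℕ × MTree)) (i : ℕ), i < Δ.length →
      RhoMinus (.node Δ Γ) (.node (Δ.eraseIdx i) Γ)

inductive Sigma' : MTree → MTree → Prop where
  | mk : ∀ (Δ : List ℕ) (Γ : List (ℕ × MTree)) (i j : ℕ)
      (hi : i < Γ.length) (hj : j < Γ.length), i ≠ j →
      Sigma' (.node Δ Γ) (.node Δ ((Γ.set i (Γ.get ⟨j, hj⟩)).set j (Γ.get ⟨i, hi⟩)))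

inductive PiPlus : MTree → MTree → Prop where
  | mk : ∀ (Δ : List ℕ) (Γ : List (ℕ × MTree)) (i : ℕ) (h : i < Γ.length),
      PiPlus (.node Δ Γ) (.node Δ (Γ.get ⟨i, h⟩ :: Γ))

inductive PiMinus : MTree → MTree → Prop where
  | mk : ∀ (Δ : List ℕ) (Γ : List (ℕ × MTree)) (i : ℕ), i < Γ.length →
      PiMinus (.node Δ Γ) (.node Δ (Γ.eraseIdx i))

inductive FourR : MTree → MTree → Prop where
  | mk : ∀ (Δ : List ℕ) (Γ : List (ℕ × MTree)) (i : ℕ) (h : i < Γ.length)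
      (β : ℕ) (s : MTree),
      Γ.get ⟨i, h⟩ = (β, .node [] [(β, s)]) →
      FourR (.node Δ Γ) (.node Δ (Γ.set i (β, s)))

inductive MonoR : MTree → MTree → Prop where
  | mk : ∀ (Δ : List ℕ) (Γ : List (ℕ × MTree)) (i : ℕ) (h : i < Γ.length)
      (α β : ℕ) (s : MTree),
      Γ.get ⟨i, h⟩ = (α, s) → β < α →
      MonoR (.node Δ Γ) (.node Δ (Γ.set i (β, s)))

inductive JayR : MTree → MTree → Prop where
  | mk : ∀ (Δ : List ℕ) (Γ : List (ℕ × MTree)) (i j : ℕ)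
      (hi : i < Γ.length) (hj : j < Γ.length)
      (α β : ℕ) (Δ' : List ℕ) (Γ' : List (ℕ × MTree)) (s : MTree),
      i ≠ j → Γ.get ⟨i, hi⟩ = (α, .node Δ' Γ') → Γ.get ⟨j, hj⟩ = (β, s) → β < α →
      JayR (.node Δ Γ)
        (.node Δ ((Γ.set i (α, .node Δ' (Γ' ++ [(β, s)]))).eraseIdx j))

inductive Ax : Type where
  | four | mono | jay
deriving DecidableEq

def axRule : Ax → MTree → MTree → Prop
  | .four => FourR
  | .mono => MonoR
  | .jay  => JayR

def rootStep (A : Set Ax) (t t' : MTree) : Prop :=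
  RhoPlus t t' ∨ RhoMinus t t' ∨ Sigma' t t' ∨ PiPlus t t' ∨ PiMinus t t' ∨
    ∃ a ∈ A, axRule a t t'

def deepStep (R : MTree → MTree → Prop) (t t' : MTree) : Prop :=
  ∃ k s', IsPos k t ∧ R (subtree k t) s' ∧ t' = replace k t s'

def Rw (A : Set Ax) : MTree → MTree → Prop :=
  Relation.ReflTransGen (deepStep (rootStep A))

end MTree

inductive SPF : Type where
  | top
  | var : ℕ → SPF
  | dia : ℕ → SPF → SPF
  | and : SPF → SPF → SPF

namespace SPF

def md : SPF → ℕ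
  | .top => 0
  | .var _ => 0
  | .dia _ φ => φ.md + 1
  | .and φ ψ => max φ.md ψ.md

def bigAnd : List SPF → SPF
  | [] => .top
  | φ :: l => .and φ (bigAnd l)

def toTree : SPF → MTree
  | .top => .node [] []
  | .var p => .node [p] []
  | .dia α φ => .node [] [(α, toTree φ)]
  | .and φ ψ => (toTree φ).sum (toTree ψ)

end SPF

namespace MTree
mutual
def toForm : MTree → SPF
  | .node Δ Γ => .and (SPF.bigAnd (Δ.map .var)) (toFormL Γ)
def toFormL : List (ℕ × MTree) → SPF
  | [] => .top
  | (α, t) :: Γ => .and (.dia α (toForm t)) (toFormL Γ)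
end
end MTree

inductive Deriv (A : Set MTree.Ax) : SPF → SPF → Prop where
  | refl (φ) : Deriv A φ φ
  | top (φ) : Deriv A φ .top
  | trans {φ ψ χ} : Deriv A φ ψ → Deriv A ψ χ → Deriv A φ χ
  | andE1 (φ ψ) : Deriv A (.and φ ψ) φ
  | andE2 (φ ψ) : Deriv A (.and φ ψ) ψ
  | andI {φ ψ χ} : Deriv A φ ψ → Deriv A φ χ → Deriv A φ (.and ψ χ)
  | dist {φ ψ} (α : ℕ) : Deriv A φ ψ → Deriv A (.dia α φ) (.dia α ψ)
  | four (α : ℕ) (φ) : MTree.Ax.four ∈ A → Deriv A (.dia α (.dia α φ)) (.dia α φ)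
  | mono (α β : ℕ) (φ) : MTree.Ax.mono ∈ A → β < α → Deriv A (.dia α φ) (.dia β φ)
  | jay (α β : ℕ) (φ ψ) : MTree.Ax.jay ∈ A → β < α →
      Deriv A (.and (.dia α φ) (.dia β ψ)) (.dia α (.and φ (.dia β ψ)))

inductive RuleKind : Type where
  | rhoP | rhoM | sigma | piP | piM | four | mono | jay
deriving DecidableEq

def RuleKind.rel : RuleKind → MTree → MTree → Prop
  | .rhoP => MTree.RhoPlus
  | .rhoM => MTree.RhoMinus
  | .sigma => MTree.Sigma'
  | .piP => MTree.PiPlus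
  | .piM => MTree.PiMinus
  | .four => MTree.FourR
  | .mono => MTree.MonoR
  | .jay => MTree.JayR

def listRw : List RuleKind → MTree → MTree → Prop
  | [], t, s => t = s
  | μ :: Ω, t, s => ∃ u, MTree.deepStep μ.rel t u ∧ listRw Ω u s

/-
`T` turns conjunction into the sum of trees, and `F` of a sum is, up to reassociating and
reordering conjuncts, the conjunction of the `F`s of the summands; every other clause of `T`
is undone by `F` up to conjuncts `⊤`. Induction on `φ` then gives the equivalence using only the
rules of `K⁺`.
-/

namespace Deriv

variable {A : Set MTree.Ax} {φ φ' ψ ψ' χ ω : SPF}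

theorem and_congr (hφ : Deriv A φ φ') (hψ : Deriv A ψ ψ') :
    Deriv A (.and φ ψ) (.and φ' ψ') :=
  andI (trans (andE1 _ _) hφ) (trans (andE2 _ _) hψ)

theorem and_assoc : Deriv A (.and (.and φ ψ) χ) (.and φ (.and ψ χ)) :=
  andI (trans (andE1 _ _) (andE1 _ _)) (and_congr (andE2 _ _) (refl _))

theorem and_assoc' : Deriv A (.and φ (.and ψ χ)) (.and (.and φ ψ) χ) :=
  andI (and_congr (refl _) (andE1 _ _)) (trans (andE2 _ _) (andE2 _ _))

theorem and_and_and_comm :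
    Deriv A (.and (.and φ ψ) (.and χ ω)) (.and (.and φ χ) (.and ψ ω)) :=
  andI (and_congr (andE1 _ _) (andE1 _ _)) (and_congr (andE2 _ _) (andE2 _ _))

end Deriv

section

variable {A : Set MTree.Ax}

theorem SPF.bigAnd_append (l l' : List SPF) :
    Deriv A (bigAnd (l ++ l')) (.and (bigAnd l) (bigAnd l')) ∧
    Deriv A (.and (bigAnd l) (bigAnd l')) (bigAnd (l ++ l')) := by
  induction l with
  | nil => exact ⟨.andI (.top _) (.refl _), .andE2 _ _⟩
  | cons φ l ih =>
    exact ⟨.trans (.and_congr (.refl _) ih.1) .and_assoc',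
      .trans .and_assoc (.and_congr (.refl _) ih.2)⟩

theorem MTree.toFormL_eq_bigAnd (Γ : List (ℕ × MTree)) :
    toFormL Γ = SPF.bigAnd (Γ.map fun p => .dia p.1 (toForm p.2)) := by
  induction Γ with
  | nil => rfl
  | cons p Γ ih => simp only [toFormL, ih, List.map_cons, SPF.bigAnd]

theorem MTree.toForm_sum (t s : MTree) :
    Deriv A (toForm (t.sum s)) (.and (toForm t) (toForm s)) ∧
    Deriv A (.and (toForm t) (toForm s)) (toForm (t.sum s)) := by
  obtain ⟨Δ, Γ⟩ := t
  obtain ⟨Δ', Γ'⟩ := s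
  simp only [sum, toForm, toFormL_eq_bigAnd, List.map_append]
  exact ⟨.trans (.and_congr (SPF.bigAnd_append _ _).1 (SPF.bigAnd_append _ _).1)
      .and_and_and_comm,
    .trans .and_and_and_comm
      (.and_congr (SPF.bigAnd_append _ _).2 (SPF.bigAnd_append _ _).2)⟩

end

theorem stmt7 (φ : SPF) :
    Deriv (∅ : Set MTree.Ax) (MTree.toForm (SPF.toTree φ)) φ ∧
    Deriv (∅ : Set MTree.Ax) φ (MTree.toForm (SPF.toTree φ)) := by
  induction φ with
  | top => exact ⟨.top _, .andI (.refl _) (.refl _)⟩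
  | var p =>
    exact ⟨.trans (.andE1 _ _) (.andE1 _ _), .andI (.andI (.refl _) (.top _)) (.top _)⟩
  | dia α ψ ih =>
    exact ⟨.trans (.andE2 _ _) (.trans (.andE1 _ _) (.dist α ih.1)),
      .andI (.top _) (.andI (.dist α ih.2) (.top _))⟩
  | and ψ χ ih₁ ih₂ =>
    exact ⟨.trans (MTree.toForm_sum _ _).1 (.and_congr ih₁.1 ih₂.1),
      .trans (.and_congr ih₁.2 ih₂.2) (MTree.toForm_sum _ _).2⟩
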